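/- Let ℳ be a model category in which every object is fibrant, with a fixed cofibrant weakly contractible functor 𝔾 → ℳ. For an object X of ℳ, let G = Π_∞(X) be its fundamental ∞-groupoid, whose n-arrows are the morphisms D_n → X. Then: (i) two objects x, y : D_0 → X of G are homotopic in G iff x = y in Ho(ℳ), giving a natural bijection π_0(Π_∞(X)) ≅ π_0(X) = [*, X]; (ii) for n ≥ 1 and parallel (n−1)-arrows x, y, two n-arrows u, v : D_n → X from x to y are homotopic in G iff u = v as morphisms (D_n, i_n) → (X, (y,x)) in Ho(S_{n-1}\ℳ), giving a natural bijection π_n(Π_∞(X), x, y) ≅ [(D_n, i_n), (X, (y,x))]_{S_{n-1}\ℳ}. -/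

import Mathlib

/-!
STATEMENT 17: Let `ℳ` be a model category in which every object is fibrant, with a
fixed cofibrant weakly contractible functor `𝔾 → ℳ`.  For an object `X` of `ℳ`, let
`G = Π_∞(X)` be its fundamental ∞-groupoid, with `n`-arrows the morphisms
`D_n → X`.  Then:
(i) two objects `x, y : D₀ → X` of `G` are homotopic in `G` iff `x = y` in
`Ho(ℳ)`, giving a bijection `π₀(Π_∞(X)) ≅ π₀(X) = [*, X]`;
(ii) for `n ≥ 1` (written `n = m + 1`) and parallel `(n-1)`-arrows `x, y`, two
`n`-arrows `u, v : D_n → X` from `x` to `y` are homotopic in `G` iff `u = v` as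
morphisms `(D_n, i_n) → (X, (y, x))` in `Ho(S_{n-1}\ℳ)`, giving a bijection
`π_n(Π_∞(X), x, y) ≅ [(D_n, i_n), (X, (y, x))]_{S_{n-1}\ℳ}`.
The homotopy categories are realized as localizations at the weak equivalences
(resp. the morphisms of the under category whose underlying morphism is a weak
equivalence); an `n`-arrow `u` from `x` to `y` is a morphism `u : D_n ⟶ X` such
that `i_n ≫ u = (y, x) : S_{n-1} ⟶ X`.
-/

open CategoryTheory Opposite

universe w v u

/-- A coglobular object: a category under the globe category 𝔾. -/
structure Coglob (E : Type u) [Category.{v} E] where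
  D : ℕ → E
  σ : ∀ n, D n ⟶ D (n + 1)
  τ : ∀ n, D n ⟶ D (n + 1)
  relσ : ∀ n, σ n ≫ σ (n + 1) = σ n ≫ τ (n + 1)
  relτ : ∀ n, τ n ≫ σ (n + 1) = τ n ≫ τ (n + 1)

namespace Coglob

variable {E : Type u} [Category.{v} E] (Φ : Coglob E)

/-- Iterated cosource `σ^{j+k}_j : D j ⟶ D (j+k)`. -/
def σUp (j : ℕ) : ∀ k : ℕ, Φ.D j ⟶ Φ.D (j + k)
  | 0 => 𝟙 _
  | k + 1 => σUp j k ≫ Φ.σ (j + k)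

/-- Iterated cotarget `τ^{j+k}_j : D j ⟶ D (j+k)`. -/
def τUp (j : ℕ) : ∀ k : ℕ, Φ.D j ⟶ Φ.D (j + k)
  | 0 => 𝟙 _
  | k + 1 => τUp j k ≫ Φ.τ (j + k)

lemma τUp_σ (j k : ℕ) :
    Φ.τUp j (k + 1) ≫ Φ.σ (j + k + 1) = Φ.τUp j (k + 2) := by
  show (Φ.τUp j k ≫ Φ.τ (j + k)) ≫ Φ.σ (j + k + 1) =
    (Φ.τUp j k ≫ Φ.τ (j + k)) ≫ Φ.τ (j + k + 1)
  rw [Category.assoc, Category.assoc, Φ.relτ]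

lemma σUp_τ (j k : ℕ) :
    Φ.σUp j (k + 1) ≫ Φ.τ (j + k + 1) = Φ.σUp j (k + 2) := by
  show (Φ.σUp j k ≫ Φ.σ (j + k)) ≫ Φ.τ (j + k + 1) =
    (Φ.σUp j k ≫ Φ.σ (j + k)) ≫ Φ.σ (j + k + 1)
  rw [Category.assoc, Category.assoc, Φ.relσ]

/-- Iterated cosource `D 0 ⟶ D n`. -/
def σZero : ∀ n : ℕ, Φ.D 0 ⟶ Φ.D n
  | 0 => 𝟙 _
  | n + 1 => σZero n ≫ Φ.σ n

/-- Globular parallelism of two morphisms with source a globe `D n`. -/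
def Par : ∀ {n : ℕ} {Y : E}, (Φ.D n ⟶ Y) → (Φ.D n ⟶ Y) → Prop
  | 0, _, _, _ => True
  | m + 1, _, f, g => (Φ.σ m ≫ f = Φ.σ m ≫ g) ∧ (Φ.τ m ≫ f = Φ.τ m ≫ g)

end Coglob

/-- Tables of dimensions, indexed by the dimension of the first globe: the table
`cons j d e T` glues a disk of dimension `j + d + 1` along the dimension `j` onto a
table whose first dimension is `j + e + 1` (so that both dimensions exceed the
gluing dimension, as required for a table of dimensions). -/
inductive GTable : ℕ → Type where
  | single (i : ℕ) : GTable i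
  | cons (j d e : ℕ) (T : GTable (j + e + 1)) : GTable (j + d + 1)

/-- Dimension of a table: the greatest dimension appearing in it. -/
def GTable.dim : ∀ {i : ℕ}, GTable i → ℕ
  | _, .single i => i
  | _, .cons j d _ T => max (j + d + 1) T.dim


open CategoryTheory CategoryTheory.Limits

/-- A (Quillen closed) model structure on a category: three classes of morphisms
(weak equivalences, cofibrations, fibrations) satisfying two-out-of-three,
stability under retracts, the lifting axioms and the factorization axioms.
(Completeness assumptions are imposed separately via `HasFiniteLimits` etc.) -/
structure ModelStr (M : Type u) [Category.{v} M] where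
  W : MorphismProperty M
  Cof : MorphismProperty M
  Fib : MorphismProperty M
  w_comp : ∀ {A B C : M} (f : A ⟶ B) (g : B ⟶ C), W f → W g → W (f ≫ g)
  w_cancel_left : ∀ {A B C : M} (f : A ⟶ B) (g : B ⟶ C), W (f ≫ g) → W g → W f
  w_cancel_right : ∀ {A B C : M} (f : A ⟶ B) (g : B ⟶ C), W (f ≫ g) → W f → W g
  retract_stable : ∀ {A B A' B' : M} (f : A ⟶ B) (g : A' ⟶ B')
    (iA : A ⟶ A') (rA : A' ⟶ A) (iB : B ⟶ B') (rB : B' ⟶ B),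
    iA ≫ rA = 𝟙 A → iB ≫ rB = 𝟙 B → iA ≫ g = f ≫ iB → g ≫ rB = rA ≫ f →
    (W g → W f) ∧ (Cof g → Cof f) ∧ (Fib g → Fib f)
  lift_cof_tfib : ∀ {A B X Y : M} (i : A ⟶ B) (p : X ⟶ Y),
    Cof i → Fib p → W p → HasLiftingProperty i p
  lift_tcof_fib : ∀ {A B X Y : M} (i : A ⟶ B) (p : X ⟶ Y),
    Cof i → W i → Fib p → HasLiftingProperty i p
  fact_cof_tfib : ∀ {A B : M} (f : A ⟶ B),
    ∃ (Z : M) (i : A ⟶ Z) (p : Z ⟶ B), Cof i ∧ Fib p ∧ W p ∧ i ≫ p = f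
  fact_tcof_fib : ∀ {A B : M} (f : A ⟶ B),
    ∃ (Z : M) (i : A ⟶ Z) (p : Z ⟶ B), Cof i ∧ W i ∧ Fib p ∧ i ≫ p = f

namespace ModelStr

variable {M : Type u} [Category.{v} M] (ms : ModelStr M)

/-- An object is weakly contractible if `X → *` is a weak equivalence. -/
def WeaklyContractible [HasTerminal M] (X : M) : Prop := ms.W (terminal.from X)

/-- An object is fibrant if `X → *` is a fibration. -/
def Fibrant [HasTerminal M] (X : M) : Prop := ms.Fib (terminal.from X)

/-- An object is cofibrant if `∅ → X` is a cofibration. -/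
def Cofibrant [HasInitial M] (X : M) : Prop := ms.Cof (initial.to X)

end ModelStr

section GlobMC

variable {M : Type u} [Category.{v} M]

/-- The globular sums of a coglobular object in a category with pushouts:
the iterated amalgamated sum associated to a table of dimensions, together with the
inclusion of the first globe. -/
noncomputable def gsumP [HasPushouts M] (Φ : Coglob M) :
    ∀ {i : ℕ}, GTable i → Σ' (S : M), (Φ.D i ⟶ S)
  | _, .single i => ⟨Φ.D i, 𝟙 _⟩
  | _, .cons j d e T =>
    ⟨pushout (Φ.σUp j (d + 1)) (Φ.τUp j (e + 1) ≫ (gsumP Φ T).2),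
      pushout.inl _ _⟩

/-- The spheres `S_{n-1}` of a coglobular object, with the inclusion
`i_n : S_{n-1} ⟶ D_n`: `S_{-1} = ∅` and `S_n = D_n ∐_{S_{n-1}} D_n`,
`i_{n+1} = (τ_{n+1}, σ_{n+1})`. -/
noncomputable def sphereP [HasInitial M] [HasPushouts M] (Φ : Coglob M) :
    ∀ n : ℕ, Σ' (Sob : M) (i : Sob ⟶ Φ.D n), i ≫ Φ.σ n = i ≫ Φ.τ n
  | 0 => ⟨⊥_ M, initial.to _, initial.hom_ext _ _⟩
  | n + 1 =>
    ⟨pushout (sphereP Φ n).2.1 (sphereP Φ n).2.1,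
      pushout.desc (Φ.τ n) (Φ.σ n) (sphereP Φ n).2.2.symm, by
        apply pushout.hom_ext
        · rw [pushout.inl_desc_assoc, pushout.inl_desc_assoc]
          exact Φ.relτ n
        · rw [pushout.inr_desc_assoc, pushout.inr_desc_assoc]
          exact Φ.relσ n⟩

/-- A coglobular object (functor `𝔾 → M`) is cofibrant if each latching morphism
`i_n : S_{n-1} ⟶ D_n` is a cofibration. -/
def CofibrantCoglob [HasInitial M] [HasPushouts M] (ms : ModelStr M)
    (Φ : Coglob M) : Prop :=
  ∀ n : ℕ, ms.Cof (sphereP Φ n).2.1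

/-- A coglobular object is weakly contractible if each globe `D_n` is weakly
contractible. -/
def WeaklyContractibleCoglob [HasTerminal M] (ms : ModelStr M) (Φ : Coglob M) :
    Prop :=
  ∀ n : ℕ, ms.WeaklyContractible (Φ.D n)

end GlobMC

/-- The weak equivalences of the under model category `S\ℳ`. -/
def underW {M : Type u} [Category.{v} M] (ms : ModelStr M) (S : M) :
    MorphismProperty (Under S) :=
  fun _ _ φ => ms.W φ.right

/-- The morphism `(y, x) : S_n ⟶ X` determined by a parallel pair of `n`-arrows
(recall `S_n = D_n ∐_{S_{n-1}} D_n`). -/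
noncomputable def parPair {M : Type u} [Category.{v} M] [HasInitial M]
    [HasPushouts M] (Φ : Coglob M) {m : ℕ} {X : M} (x y : Φ.D m ⟶ X)
    (hpar : (sphereP Φ m).2.1 ≫ y = (sphereP Φ m).2.1 ≫ x) :
    (sphereP Φ (m + 1)).1 ⟶ X :=
  pushout.desc y x hpar


/-!
Write `u ∼ v` when some `h : D_{n+1} ⟶ X` has `σ ≫ h = u` and `τ ≫ h = v`. Lifting the
codiagonal `S_n ⟶ D_n` along the cofibration `i_{n+1}` against the trivial fibration `D_n ⟶ *`
gives a counit `κ : D_{n+1} ⟶ D_n`, so `(D_{n+1}, σ, τ, κ)` is a cylinder for `D_n` and `∼` is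
the left homotopy relation for it. As `S_n = D_n ⊔_{S_{n-1}} D_n`, the cofibration `i_{n+1}`
makes it a good cylinder for `(D_n, i_n)` in the under model category `S_{n-1}\ℳ` (and for
`D_0` in `ℳ`, since `S_{-1}` is initial). By the fundamental lemma of homotopical algebra,
between a cofibrant source and a fibrant target, homotopy with respect to a fixed good cylinder
is equality in the homotopy category, and its classes biject with the morphisms there.
-/

open HomotopicalAlgebra

namespace ModelStr

variable {C : Type u} [Category.{v} C]

lemma of_retractArrow (ms : ModelStr C) {A B A' B' : C} {f : A ⟶ B} {g : A' ⟶ B'}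
    (h : RetractArrow f g) :
    (ms.W g → ms.W f) ∧ (ms.Cof g → ms.Cof f) ∧ (ms.Fib g → ms.Fib f) :=
  ms.retract_stable f g h.i.left h.r.left h.i.right h.r.right
    (Arrow.hom.congr_left h.retract) (Arrow.hom.congr_right h.retract) h.i.w h.r.w.symm

abbrev toModelCategory [HasFiniteLimits C] [HasFiniteColimits C] (ms : ModelStr C) :
    ModelCategory C where
  categoryWithFibrations := ⟨ms.Fib⟩
  categoryWithCofibrations := ⟨ms.Cof⟩
  categoryWithWeakEquivalences := ⟨ms.W⟩
  cm2 :=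
    { comp_mem := ms.w_comp
      of_postcomp := fun f g hg hfg => ms.w_cancel_left f g hfg hg
      of_precomp := fun f g hf hfg => ms.w_cancel_right f g hfg hf }
  cm3a := ⟨fun h => (ms.of_retractArrow h).1⟩
  cm3b := ⟨fun h => (ms.of_retractArrow h).2.2⟩
  cm3c := ⟨fun h => (ms.of_retractArrow h).2.1⟩
  cm4a i p hi hwi hp := ms.lift_tcof_fib i p hi.mem hwi.mem hp.mem
  cm4b i p hi hp hwp := ms.lift_cof_tfib i p hi.mem hp.mem hwp.mem
  cm5a := ⟨fun f => by
    obtain ⟨Z, i, p, hi, hwi, hp, fac⟩ := ms.fact_tcof_fib f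
    exact ⟨⟨Z, i, p, fac, ⟨hi, hwi⟩, hp⟩⟩⟩
  cm5b := ⟨fun f => by
    obtain ⟨Z, i, p, hi, hp, hwp, fac⟩ := ms.fact_cof_tfib f
    exact ⟨⟨Z, i, p, fac, hi, ⟨hp, hwp⟩⟩⟩⟩

end ModelStr

namespace CategoryTheory

variable {C : Type*} [Category C]

lemma HasLiftingProperty.under {S : C} {A B X Y : Under S} (i : A ⟶ B) (p : X ⟶ Y)
    [HasLiftingProperty i.right p.right] : HasLiftingProperty i p := by
  refine ⟨fun {f g} sq => ?_⟩
  have sq' : CommSq f.right i.right p.right g.right := sq.map (Under.forget S)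
  exact ⟨⟨{
    l := Under.homMk sq'.lift (by rw [← Under.w i, Category.assoc, sq'.fac_left, Under.w f])
    fac_left := by ext; exact sq'.fac_left
    fac_right := by ext; exact sq'.fac_right }⟩⟩

instance MorphismProperty.HasFactorization.under (W₁ W₂ : MorphismProperty C)
    [W₁.HasFactorization W₂] (S : C) : (W₁.under (X := S)).HasFactorization W₂.under where
  nonempty_mapFactorizationData {X Y} f := by
    let hf := W₁.factorizationData W₂ f.right
    exact ⟨{
      Z := .mk (X.hom ≫ hf.i)
      i := CategoryTheory.Under.homMk (V := .mk (X.hom ≫ hf.i)) hf.i rfl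
      p := CategoryTheory.Under.homMk (U := .mk (X.hom ≫ hf.i)) hf.p
        (by simp [CategoryTheory.Under.w f])
      fac := by ext; exact hf.fac
      hi := hf.hi
      hp := hf.hp }⟩

instance Under.hasFiniteLimits [HasFiniteLimits C] (S : C) : HasFiniteLimits (Under S) :=
  ⟨fun _ _ _ => inferInstance⟩

def Under.isTerminalMk {S T : C} (hT : IsTerminal T) (f : S ⟶ T) : IsTerminal (Under.mk f) :=
  IsTerminal.ofUniqueHom (fun Z => Under.homMk (hT.from Z.right) (hT.hom_ext _ _))
    (fun _ _ => by ext; exact hT.hom_ext _ _)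

def Under.homMkEquiv {S : C} (U V : Under S) :
    {f : U.right ⟶ V.right // U.hom ≫ f = V.hom} ≃ (U ⟶ V) where
  toFun f := Under.homMk f.1 f.2
  invFun f := ⟨f.right, Under.w f⟩
  left_inv _ := rfl
  right_inv _ := rfl

end CategoryTheory

namespace HomotopicalAlgebra

section UnderModelCategory

variable {C : Type*} [Category C] (S : C)

instance [CategoryWithCofibrations C] : CategoryWithCofibrations (Under S) :=
  ⟨(cofibrations C).under⟩

instance [CategoryWithFibrations C] : CategoryWithFibrations (Under S) :=
  ⟨(fibrations C).under⟩

instance [CategoryWithWeakEquivalences C] : CategoryWithWeakEquivalences (Under S) :=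
  ⟨(weakEquivalences C).under⟩

variable {S}

lemma cofibration_under_iff [CategoryWithCofibrations C] {X Y : Under S} (f : X ⟶ Y) :
    Cofibration f ↔ Cofibration f.right :=
  ⟨fun h => ⟨h.mem⟩, fun h => ⟨h.mem⟩⟩

lemma fibration_under_iff [CategoryWithFibrations C] {X Y : Under S} (f : X ⟶ Y) :
    Fibration f ↔ Fibration f.right :=
  ⟨fun h => ⟨h.mem⟩, fun h => ⟨h.mem⟩⟩

lemma weakEquivalence_under_iff [CategoryWithWeakEquivalences C] {X Y : Under S} (f : X ⟶ Y) :
    WeakEquivalence f ↔ WeakEquivalence f.right :=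
  ⟨fun h => ⟨h.mem⟩, fun h => ⟨h.mem⟩⟩

instance [CategoryWithCofibrations C] {X Y : Under S} (f : X ⟶ Y) [Cofibration f] :
    Cofibration f.right := (cofibration_under_iff f).1 ‹_›

instance [CategoryWithFibrations C] {X Y : Under S} (f : X ⟶ Y) [Fibration f] :
    Fibration f.right := (fibration_under_iff f).1 ‹_›

instance [CategoryWithWeakEquivalences C] {X Y : Under S} (f : X ⟶ Y) [WeakEquivalence f] :
    WeakEquivalence f.right := (weakEquivalence_under_iff f).1 ‹_›

variable (S)

instance [CategoryWithWeakEquivalences C] [(weakEquivalences C).HasTwoOutOfThreeProperty] :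
    (weakEquivalences (Under S)).HasTwoOutOfThreeProperty :=
  inferInstanceAs ((weakEquivalences C).inverseImage (Under.forget S)).HasTwoOutOfThreeProperty

instance [CategoryWithWeakEquivalences C] [(weakEquivalences C).IsStableUnderRetracts] :
    (weakEquivalences (Under S)).IsStableUnderRetracts :=
  inferInstanceAs ((weakEquivalences C).inverseImage (Under.forget S)).IsStableUnderRetracts

instance [CategoryWithFibrations C] [(fibrations C).IsStableUnderRetracts] :
    (fibrations (Under S)).IsStableUnderRetracts :=
  inferInstanceAs ((fibrations C).inverseImage (Under.forget S)).IsStableUnderRetracts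

instance [CategoryWithCofibrations C] [(cofibrations C).IsStableUnderRetracts] :
    (cofibrations (Under S)).IsStableUnderRetracts :=
  inferInstanceAs ((cofibrations C).inverseImage (Under.forget S)).IsStableUnderRetracts

section

variable [CategoryWithWeakEquivalences C] [CategoryWithCofibrations C]
  [CategoryWithFibrations C]

instance [(trivialCofibrations C).HasFactorization (fibrations C)] :
    (trivialCofibrations (Under S)).HasFactorization (fibrations (Under S)) :=
  inferInstanceAs ((trivialCofibrations C).under.HasFactorization (fibrations C).under)

instance [(cofibrations C).HasFactorization (trivialFibrations C)] :
    (cofibrations (Under S)).HasFactorization (trivialFibrations (Under S)) :=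
  inferInstanceAs ((cofibrations C).under.HasFactorization (trivialFibrations C).under)

end

instance ModelCategory.under [ModelCategory C] : ModelCategory (Under S) where
  cm4a i p _ _ _ := .under i p
  cm4b i p _ _ _ := .under i p

variable {S}

instance isFibrant_under_mk [ModelCategory C] {A : C} (f : S ⟶ A) [IsFibrant A] :
    IsFibrant (Under.mk f) := by
  rw [isFibrant_iff_of_isTerminal (Under.homMk (terminal.from A) (terminal.hom_ext _ _) :
      Under.mk f ⟶ Under.mk (terminal.from S)) (Under.isTerminalMk terminalIsTerminal _),
    fibration_under_iff]
  assumption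

lemma isCofibrant_under_mk_iff [ModelCategory C] {A : C} (i : S ⟶ A) :
    IsCofibrant (Under.mk i) ↔ Cofibration i := by
  rw [isCofibrant_iff_of_isInitial (Under.homMk i : Under.mk (𝟙 S) ⟶ Under.mk i)
    Under.mkIdInitial, cofibration_under_iff]
  rfl

instance [ModelCategory C] {A : C} (i : S ⟶ A) [Cofibration i] : IsCofibrant (Under.mk i) :=
  (isCofibrant_under_mk_iff i).2 ‹_›

end UnderModelCategory

section Cylinders

variable {C : Type*} [Category C]

lemma Cylinder.isGood_of_isColimit [ModelCategory C] {A : C} (P : Cylinder A)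
    {c : BinaryCofan A A} (hc : IsColimit c) (j : c.pt ⟶ P.I) (hj : Cofibration j)
    (h₀ : c.inl ≫ j = P.i₀) (h₁ : c.inr ≫ j = P.i₁) : P.IsGood where
  cofibration_i := by
    let e := (colimit.isColimit (pair A A)).coconePointUniqueUpToIso hc
    have : P.i = e.hom ≫ j := by
      ext
      · rw [Precylinder.inl_i, ← h₀]
        exact (IsColimit.comp_coconePointUniqueUpToIso_hom_assoc _ hc ⟨.left⟩ j).symm
      · rw [Precylinder.inr_i, ← h₁]
        exact (IsColimit.comp_coconePointUniqueUpToIso_hom_assoc _ hc ⟨.right⟩ j).symm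
    rw [this]
    infer_instance

def Cylinder.under [CategoryWithWeakEquivalences C] {S : C} {A : Under S}
    (P : Cylinder A.right) (h : A.hom ≫ P.i₀ = A.hom ≫ P.i₁) : Cylinder A where
  I := Under.mk (A.hom ≫ P.i₀)
  i₀ := Under.homMk P.i₀
  i₁ := Under.homMk P.i₁ h.symm
  π := Under.homMk P.π (by simp)
  i₀_π := by ext; simp
  i₁_π := by ext; simp
  weakEquivalence_π := by rw [weakEquivalence_under_iff]; exact P.weakEquivalence_π

lemma Cylinder.under_exists_homotopy_iff [CategoryWithWeakEquivalences C] {S : C}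
    {A Y : Under S} (P : Cylinder A.right) (h : A.hom ≫ P.i₀ = A.hom ≫ P.i₁) (f g : A ⟶ Y) :
    (∃ H : (P.under h).I ⟶ Y, (P.under h).i₀ ≫ H = f ∧ (P.under h).i₁ ≫ H = g) ↔
      ∃ H : P.I ⟶ Y.right, P.i₀ ≫ H = f.right ∧ P.i₁ ≫ H = g.right := by
  constructor
  · rintro ⟨H, h₀, h₁⟩
    exact ⟨H.right, congr($(h₀).right), congr($(h₁).right)⟩
  · rintro ⟨H, h₀, h₁⟩
    refine ⟨Under.homMk (U := (P.under h).I) H ?_, ?_, ?_⟩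
    · change (A.hom ≫ P.i₀) ≫ H = Y.hom
      rw [Category.assoc, h₀, Under.w f]
    all_goals ext; assumption

variable [ModelCategory C] {H : Type*} [Category H] (L : C ⥤ H)
  [L.IsLocalization (weakEquivalences C)] {A X : C} [IsCofibrant A] [IsFibrant X]
  (P : Cylinder A) [P.IsGood]

lemma Cylinder.exists_homotopy_iff_map_eq (f g : A ⟶ X) :
    (∃ h : P.I ⟶ X, P.i₀ ≫ h = f ∧ P.i₁ ≫ h = g) ↔ L.map f = L.map g := by
  rw [← LeftHomotopyRel.iff_map_eq L]
  refine ⟨fun ⟨h, h₀, h₁⟩ => ⟨P, ⟨{ h, h₀, h₁ }⟩⟩, fun hfg => ?_⟩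
  let H := hfg.leftHomotopy P
  exact ⟨H.h, H.h₀, H.h₁⟩

noncomputable def Cylinder.homotopyQuotEquiv :
    Quot (fun f g : A ⟶ X => ∃ h : P.I ⟶ X, P.i₀ ≫ h = f ∧ P.i₁ ≫ h = g) ≃
      (L.obj A ⟶ L.obj X) :=
  (Quot.congrRight fun f g => by
      rw [P.exists_homotopy_iff_map_eq L, LeftHomotopyRel.iff_map_eq L]).trans
    (Equiv.ofBijective _ (bijective_leftHomotopyClassToHom L A X))

end Cylinders

end HomotopicalAlgebra

namespace Coglob

variable {M : Type u} [Category.{v} M]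

section Spheres

variable [HasInitial M] [HasPushouts M] (Φ : Coglob M)

noncomputable def sphereSrc (n : ℕ) : Φ.D n ⟶ (sphereP Φ (n + 1)).1 := pushout.inr _ _

noncomputable def sphereTgt (n : ℕ) : Φ.D n ⟶ (sphereP Φ (n + 1)).1 := pushout.inl _ _

lemma sphere_condition (n : ℕ) :
    (sphereP Φ n).2.1 ≫ Φ.sphereSrc n = (sphereP Φ n).2.1 ≫ Φ.sphereTgt n :=
  pushout.condition.symm

noncomputable def isColimitSphere (n : ℕ) :
    IsColimit (PushoutCocone.mk _ _ (Φ.sphere_condition n)) :=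
  PushoutCocone.flipIsColimit (t := PushoutCocone.mk _ _ pushout.condition) (pushoutIsPushout _ _)

@[simp]
lemma sphereSrc_comp (n : ℕ) : Φ.sphereSrc n ≫ (sphereP Φ (n + 1)).2.1 = Φ.σ n :=
  pushout.inr_desc _ _ _

@[simp]
lemma sphereTgt_comp (n : ℕ) : Φ.sphereTgt n ≫ (sphereP Φ (n + 1)).2.1 = Φ.τ n :=
  pushout.inl_desc _ _ _

@[simp]
lemma sphereSrc_parPair {n : ℕ} {X : M} (x y : Φ.D n ⟶ X)
    (h : (sphereP Φ n).2.1 ≫ y = (sphereP Φ n).2.1 ≫ x) :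
    Φ.sphereSrc n ≫ parPair Φ x y h = x :=
  pushout.inr_desc _ _ _

@[simp]
lemma sphereTgt_parPair {n : ℕ} {X : M} (x y : Φ.D n ⟶ X)
    (h : (sphereP Φ n).2.1 ≫ y = (sphereP Φ n).2.1 ≫ x) :
    Φ.sphereTgt n ≫ parPair Φ x y h = y :=
  pushout.inl_desc _ _ _

end Spheres

variable [ModelCategory M] (Φ : Coglob M) [∀ n, Cofibration (sphereP Φ n).2.1]
  [∀ n, WeakEquivalence (terminal.from (Φ.D n))] [∀ n, IsFibrant (Φ.D n)]

lemma exists_counit (n : ℕ) : ∃ κ : Φ.D (n + 1) ⟶ Φ.D n, Φ.σ n ≫ κ = 𝟙 _ ∧ Φ.τ n ≫ κ = 𝟙 _ := by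
  have sq : CommSq (parPair Φ (𝟙 _) (𝟙 _) rfl) (sphereP Φ (n + 1)).2.1
      (terminal.from (Φ.D n)) (terminal.from (Φ.D (n + 1))) := ⟨terminal.hom_ext _ _⟩
  refine ⟨sq.lift, ?_, ?_⟩
  · simpa only [← Category.assoc, sphereSrc_comp, sphereSrc_parPair] using
      Φ.sphereSrc n ≫= sq.fac_left
  · simpa only [← Category.assoc, sphereTgt_comp, sphereTgt_parPair] using
      Φ.sphereTgt n ≫= sq.fac_left

noncomputable def counit (n : ℕ) : Φ.D (n + 1) ⟶ Φ.D n := (Φ.exists_counit n).choose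

@[simp]
lemma σ_counit (n : ℕ) : Φ.σ n ≫ Φ.counit n = 𝟙 _ := (Φ.exists_counit n).choose_spec.1

@[simp]
lemma τ_counit (n : ℕ) : Φ.τ n ≫ Φ.counit n = 𝟙 _ := (Φ.exists_counit n).choose_spec.2

/-- This cylinder is good in `ℳ` only for `n = 0`; in general it is good relative to
`S_{n-1}`, see `diskCylinderUnder`. -/
noncomputable def diskCylinder (n : ℕ) : Cylinder (Φ.D n) where
  I := Φ.D (n + 1)
  i₀ := Φ.σ n
  i₁ := Φ.τ n
  π := Φ.counit n
  weakEquivalence_π := weakEquivalence_of_postcomp_of_fac (terminal.comp_from (Φ.counit n))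

instance : (Φ.diskCylinder 0).IsGood :=
  Cylinder.isGood_of_isColimit _ (isCoproductOfIsInitialIsPushout _ _ _ _ initialIsInitial
    (Φ.isColimitSphere 0)) (sphereP Φ 1).2.1 (inferInstanceAs (Cofibration (sphereP Φ 1).2.1))
    (Φ.sphereSrc_comp 0) (Φ.sphereTgt_comp 0)

instance : IsCofibrant (Φ.D 0) := inferInstanceAs (Cofibration (sphereP Φ 0).2.1)

noncomputable def diskCylinderUnder (n : ℕ) : Cylinder (Under.mk (sphereP Φ n).2.1) :=
  Cylinder.under (Φ.diskCylinder n) (sphereP Φ n).2.2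

instance (n : ℕ) : (Φ.diskCylinderUnder n).IsGood := by
  let j : Under.mk ((sphereP Φ n).2.1 ≫ Φ.sphereSrc n) ⟶ (Φ.diskCylinderUnder n).I :=
    Under.homMk (sphereP Φ (n + 1)).2.1
      ((Category.assoc _ _ _).trans (congrArg _ (Φ.sphereSrc_comp n)))
  exact Cylinder.isGood_of_isColimit _
    (IsColimit.pushoutCoconeEquivBinaryCofanFunctor (Φ.isColimitSphere n)) j
    ((cofibration_under_iff j).2 (inferInstanceAs (Cofibration (sphereP Φ (n + 1)).2.1)))
    (by ext; exact Φ.sphereSrc_comp n)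
    (by ext; exact Φ.sphereTgt_comp n)

variable {H : Type*} [Category H] {X : M} [IsFibrant X]

lemma exists_homotopy_iff_map_eq (L : M ⥤ H) [L.IsLocalization (weakEquivalences M)]
    (x y : Φ.D 0 ⟶ X) :
    (∃ h : Φ.D 1 ⟶ X, Φ.σ 0 ≫ h = x ∧ Φ.τ 0 ≫ h = y) ↔ L.map x = L.map y :=
  (Φ.diskCylinder 0).exists_homotopy_iff_map_eq L x y

noncomputable def homotopyQuotEquiv (L : M ⥤ H) [L.IsLocalization (weakEquivalences M)] :
    Quot (fun x y : Φ.D 0 ⟶ X => ∃ h : Φ.D 1 ⟶ X, Φ.σ 0 ≫ h = x ∧ Φ.τ 0 ≫ h = y) ≃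
      (L.obj (Φ.D 0) ⟶ L.obj X) :=
  (Φ.diskCylinder 0).homotopyQuotEquiv L

variable (n : ℕ) (L : Under (sphereP Φ n).1 ⥤ H)
  [L.IsLocalization (weakEquivalences (Under (sphereP Φ n).1))] (f : (sphereP Φ n).1 ⟶ X)

lemma exists_homotopy_iff_map_eq_under (u v : Φ.D n ⟶ X) (hu : (sphereP Φ n).2.1 ≫ u = f)
    (hv : (sphereP Φ n).2.1 ≫ v = f) :
    (∃ h : Φ.D (n + 1) ⟶ X, Φ.σ n ≫ h = u ∧ Φ.τ n ≫ h = v) ↔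
      L.map (Under.homMk (U := Under.mk (sphereP Φ n).2.1) (V := Under.mk f) u hu) =
        L.map (Under.homMk (U := Under.mk (sphereP Φ n).2.1) (V := Under.mk f) v hv) :=
  (Cylinder.under_exists_homotopy_iff (A := Under.mk (sphereP Φ n).2.1) (Y := Under.mk f)
    (Φ.diskCylinder n) (sphereP Φ n).2.2 (Under.homMk u hu) (Under.homMk v hv)).symm.trans
    ((Φ.diskCylinderUnder n).exists_homotopy_iff_map_eq L _ _)

noncomputable def homotopyQuotEquivUnder :
    Quot (fun u v : {w : Φ.D n ⟶ X // (sphereP Φ n).2.1 ≫ w = f} =>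
        ∃ h : Φ.D (n + 1) ⟶ X, Φ.σ n ≫ h = u.1 ∧ Φ.τ n ≫ h = v.1) ≃
      (L.obj (Under.mk (sphereP Φ n).2.1) ⟶ L.obj (Under.mk f)) :=
  let e := Under.homMkEquiv (Under.mk (sphereP Φ n).2.1) (Under.mk f)
  (Quot.congr e fun a b => (Cylinder.under_exists_homotopy_iff (Φ.diskCylinder n)
      (sphereP Φ n).2.2 (e a) (e b)).symm).trans
    ((Φ.diskCylinderUnder n).homotopyQuotEquiv L)

end Coglob

theorem fundamental_groupoid_homotopies_via_model_structure_general {M : Type u}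
    [Category.{v} M] [HasFiniteLimits M] [HasFiniteColimits M]
    (ms : ModelStr M) (hfib : ∀ Z : M, ms.Fibrant Z) (Φ : Coglob M)
    (hcof : CofibrantCoglob ms Φ) (hwc : WeaklyContractibleCoglob ms Φ)
    (X : M) :
    -- (i): two objects of `Π_∞(X)` are homotopic iff they are equal in `Ho(ℳ)`,
    (∀ x y : Φ.D 0 ⟶ X,
      (∃ h : Φ.D 1 ⟶ X, Φ.σ 0 ≫ h = x ∧ Φ.τ 0 ≫ h = y) ↔
        ms.W.Q.map x = ms.W.Q.map y) ∧
    -- whence a bijection `π₀(Π_∞(X)) ≅ π₀(X) = [*, X]`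
    Nonempty
      (Quot (fun x y : Φ.D 0 ⟶ X =>
          ∃ h : Φ.D 1 ⟶ X, Φ.σ 0 ≫ h = x ∧ Φ.τ 0 ≫ h = y) ≃
        (ms.W.Q.obj (⊤_ M) ⟶ ms.W.Q.obj X)) ∧
    -- (ii): for parallel `(n-1)`-arrows `x, y` and `n`-arrows `u, v : x → y`,
    -- `u ∼ v` in `Π_∞(X)` iff `u = v` in `Ho(S_{n-1}\ℳ)`,
    (∀ (m : ℕ) (x y : Φ.D m ⟶ X)
      (hpar : (sphereP Φ m).2.1 ≫ y = (sphereP Φ m).2.1 ≫ x)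
      (u v : Φ.D (m + 1) ⟶ X)
      (hu : (sphereP Φ (m + 1)).2.1 ≫ u = parPair Φ x y hpar)
      (hv : (sphereP Φ (m + 1)).2.1 ≫ v = parPair Φ x y hpar),
      (∃ h : Φ.D (m + 2) ⟶ X, Φ.σ (m + 1) ≫ h = u ∧ Φ.τ (m + 1) ≫ h = v) ↔
        (underW ms (sphereP Φ (m + 1)).1).Q.map
            (Under.homMk (U := Under.mk (sphereP Φ (m + 1)).2.1)
              (V := Under.mk (parPair Φ x y hpar)) u hu) =
          (underW ms (sphereP Φ (m + 1)).1).Q.map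
            (Under.homMk (U := Under.mk (sphereP Φ (m + 1)).2.1)
              (V := Under.mk (parPair Φ x y hpar)) v hv)) ∧
    -- whence a bijection `π_n(Π_∞(X), x, y) ≅ [(D_n, i_n), (X, (y, x))]`
    (∀ (m : ℕ) (x y : Φ.D m ⟶ X)
      (hpar : (sphereP Φ m).2.1 ≫ y = (sphereP Φ m).2.1 ≫ x),
      Nonempty
        (Quot (fun u v : {w : Φ.D (m + 1) ⟶ X //
              (sphereP Φ (m + 1)).2.1 ≫ w = parPair Φ x y hpar} =>
            ∃ h : Φ.D (m + 2) ⟶ X, Φ.σ (m + 1) ≫ h = u.1 ∧ Φ.τ (m + 1) ≫ h = v.1) ≃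
          ((underW ms (sphereP Φ (m + 1)).1).Q.obj
              (Under.mk (sphereP Φ (m + 1)).2.1) ⟶
            (underW ms (sphereP Φ (m + 1)).1).Q.obj
              (Under.mk (parPair Φ x y hpar))))) := by
  let _ := ms.toModelCategory
  have : ∀ n, Cofibration (sphereP Φ n).2.1 := fun n => ⟨hcof n⟩
  have : ∀ n, WeakEquivalence (terminal.from (Φ.D n)) := fun n => ⟨hwc n⟩
  have : ∀ Z : M, IsFibrant Z := fun Z => ⟨hfib Z⟩
  have : ms.W.Q.IsLocalization (weakEquivalences M) := inferInstanceAs (ms.W.Q.IsLocalization ms.W)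
  have (S : M) : (underW ms S).Q.IsLocalization (weakEquivalences (Under S)) :=
    inferInstanceAs ((underW ms S).Q.IsLocalization (underW ms S))
  have : IsIso (ms.W.Q.map (terminal.from (Φ.D 0))) := ms.W.Q_inverts _ (hwc 0)
  exact ⟨Φ.exists_homotopy_iff_map_eq ms.W.Q,
    ⟨(Φ.homotopyQuotEquiv ms.W.Q).trans
      ((asIso (ms.W.Q.map (terminal.from (Φ.D 0)))).homCongr (Iso.refl _))⟩,
    fun m x y hpar => Φ.exists_homotopy_iff_map_eq_under (m + 1) _ (parPair Φ x y hpar),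
    fun m x y hpar => ⟨Φ.homotopyQuotEquivUnder (m + 1) _ (parPair Φ x y hpar)⟩⟩

theorem fundamental_groupoid_homotopies_via_model_structure {M : Type u}
    [Category.{v} M] [HasFiniteLimits M] [HasFiniteColimits M] [HasPushouts M]
    (ms : ModelStr M) (hfib : ∀ Z : M, ms.Fibrant Z) (Φ : Coglob M)
    (hcof : CofibrantCoglob ms Φ) (hwc : WeaklyContractibleCoglob ms Φ)
    (X : M) :
    -- (i): two objects of `Π_∞(X)` are homotopic iff they are equal in `Ho(ℳ)`,
    (∀ x y : Φ.D 0 ⟶ X,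
      (∃ h : Φ.D 1 ⟶ X, Φ.σ 0 ≫ h = x ∧ Φ.τ 0 ≫ h = y) ↔
        ms.W.Q.map x = ms.W.Q.map y) ∧
    -- whence a bijection `π₀(Π_∞(X)) ≅ π₀(X) = [*, X]`
    Nonempty
      (Quot (fun x y : Φ.D 0 ⟶ X =>
          ∃ h : Φ.D 1 ⟶ X, Φ.σ 0 ≫ h = x ∧ Φ.τ 0 ≫ h = y) ≃
        (ms.W.Q.obj (⊤_ M) ⟶ ms.W.Q.obj X)) ∧
    -- (ii): for parallel `(n-1)`-arrows `x, y` and `n`-arrows `u, v : x → y`,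
    -- `u ∼ v` in `Π_∞(X)` iff `u = v` in `Ho(S_{n-1}\ℳ)`,
    (∀ (m : ℕ) (x y : Φ.D m ⟶ X)
      (hpar : (sphereP Φ m).2.1 ≫ y = (sphereP Φ m).2.1 ≫ x)
      (u v : Φ.D (m + 1) ⟶ X)
      (hu : (sphereP Φ (m + 1)).2.1 ≫ u = parPair Φ x y hpar)
      (hv : (sphereP Φ (m + 1)).2.1 ≫ v = parPair Φ x y hpar),
      (∃ h : Φ.D (m + 2) ⟶ X, Φ.σ (m + 1) ≫ h = u ∧ Φ.τ (m + 1) ≫ h = v) ↔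
        (underW ms (sphereP Φ (m + 1)).1).Q.map
            (Under.homMk (U := Under.mk (sphereP Φ (m + 1)).2.1)
              (V := Under.mk (parPair Φ x y hpar)) u hu) =
          (underW ms (sphereP Φ (m + 1)).1).Q.map
            (Under.homMk (U := Under.mk (sphereP Φ (m + 1)).2.1)
              (V := Under.mk (parPair Φ x y hpar)) v hv)) ∧
    -- whence a bijection `π_n(Π_∞(X), x, y) ≅ [(D_n, i_n), (X, (y, x))]`
    (∀ (m : ℕ) (x y : Φ.D m ⟶ X)
      (hpar : (sphereP Φ m).2.1 ≫ y = (sphereP Φ m).2.1 ≫ x),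
      Nonempty
        (Quot (fun u v : {w : Φ.D (m + 1) ⟶ X //
              (sphereP Φ (m + 1)).2.1 ≫ w = parPair Φ x y hpar} =>
            ∃ h : Φ.D (m + 2) ⟶ X, Φ.σ (m + 1) ≫ h = u.1 ∧ Φ.τ (m + 1) ≫ h = v.1) ≃
          ((underW ms (sphereP Φ (m + 1)).1).Q.obj
              (Under.mk (sphereP Φ (m + 1)).2.1) ⟶
            (underW ms (sphereP Φ (m + 1)).1).Q.obj
              (Under.mk (parPair Φ x y hpar))))) :=
  fundamental_groupoid_homotopies_via_model_structure_general ms hfib Φ hcof hwc X
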